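/- arXiv:math/0702488 — 2 statements merged into one kernel-verified Lean document; each statement's English description precedes it below -/
import Mathlib

section
/- Let m be a nonzero integer and let d = gcd(a₁,…,aₙ,m) divide b. Then the congruence a₁x₁ + ⋯ + aₙxₙ ≡ b (mod m) has exactly d·|m|^(n−1) solutions in (ZMod |m|)ⁿ. -/
/-!
The map `x ↦ ∑ aᵢ xᵢ` is a homomorphism `(ZMod |m|)ⁿ →+ ZMod |m|`, so each of its nonempty fibres
has `|m|ⁿ / #image` elements. By Bézout, its image is the ideal generated by the `aᵢ`, which
modulo `m` is generated by `d = gcd(a₁, …, aₙ, m)`; this ideal has `|m| / d` elements and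
contains `b` because `d ∣ b`.
-/

open Finset

theorem AddMonoidHom.natCard_fiber_mul_natCard_range {G H : Type*} [AddGroup G] [AddGroup H]
    (f : G →+ H) {y : H} (hy : y ∈ f.range) :
    Nat.card {x // f x = y} * Nat.card f.range = Nat.card G := by
  obtain ⟨x₀, rfl⟩ := hy
  have hfiber : Nat.card {x // f x = f x₀} = Nat.card f.ker :=
    Nat.card_congr (f.fiberEquivKer x₀)
  rw [hfiber, ← AddSubgroup.index_ker, f.ker.card_mul_index]

theorem Ideal.span_range_eq_span_gcd {R ι : Type*} [CommRing R] [IsBezout R]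
    [NormalizedGCDMonoid R] [Fintype ι] (f : ι → R) :
    Ideal.span (Set.range f) = Ideal.span {univ.gcd f} := by
  refine le_antisymm (Ideal.span_le.mpr ?_) (Ideal.span_singleton_le_iff_mem _ |>.mpr ?_)
  · rintro _ ⟨i, rfl⟩
    exact Ideal.mem_span_singleton.mpr (gcd_dvd (mem_univ i))
  · obtain ⟨c, hc⟩ := univ.gcd_eq_sum_mul f
    rw [hc]
    exact Ideal.sum_mem _ fun i _ => Ideal.mul_mem_right _ _ (Ideal.subset_span ⟨i, rfl⟩)

theorem Ideal.span_range_intCast_eq_span_gcd {R ι : Type*} [CommRing R] [Fintype ι]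
    (a : ι → ℤ) {m : ℤ} (hm : (m : R) = 0) :
    Ideal.span (Set.range fun i => (a i : R)) =
      Ideal.span {((Int.gcd (univ.gcd a) m : ℕ) : R)} := by
  have hmap (s : Set ℤ) : (Ideal.span s).map (Int.castRingHom R) = Ideal.span (Int.cast '' s) :=
    Ideal.map_span _ s
  calc Ideal.span (Set.range fun i => (a i : R))
      = (Ideal.span (Set.range a)).map (Int.castRingHom R) := by
        rw [hmap, ← Set.range_comp]; rfl
    _ = (Ideal.span {univ.gcd a, m}).map (Int.castRingHom R) := by
        rw [Ideal.span_range_eq_span_gcd, hmap, hmap, Set.image_pair, Set.image_singleton, hm,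
          Set.pair_comm, Ideal.span_insert_zero]
    _ = Ideal.span {((Int.gcd (univ.gcd a) m : ℕ) : R)} := by
        rw [← span_gcd, ← Int.coe_gcd, hmap, Set.image_singleton, Int.cast_natCast]

theorem ZMod.coe_range_linearCombination_intCast {ι : Type*} [Fintype ι] (a : ι → ℤ) (m : ℤ) :
    (LinearMap.range (Fintype.linearCombination (ZMod m.natAbs) fun i => (a i : ZMod m.natAbs)) :
        Set (ZMod m.natAbs)) =
      Ideal.span {((Int.gcd (univ.gcd a) m : ℕ) : ZMod m.natAbs)} := by
  rw [Fintype.range_linearCombination, ← Ideal.span_range_intCast_eq_span_gcd a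
    ((ZMod.intCast_zmod_eq_zero_iff_dvd m _).mpr (Int.natAbs_dvd.mpr dvd_rfl))]

theorem ZMod.coe_span_singleton_eq_zmultiples (n : ℕ) (x : ZMod n) :
    (Ideal.span {x} : Set (ZMod n)) = AddSubgroup.zmultiples x := by
  ext y
  simp only [SetLike.mem_coe, Ideal.mem_span_singleton', AddSubgroup.mem_zmultiples_iff]
  constructor
  · rintro ⟨r, rfl⟩
    obtain ⟨k, rfl⟩ := ZMod.intCast_surjective r
    exact ⟨k, zsmul_eq_mul _ _⟩
  · rintro ⟨k, rfl⟩
    exact ⟨k, (zsmul_eq_mul _ _).symm⟩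

theorem ZMod.natCard_span_singleton_natCast {n : ℕ} (hn : n ≠ 0) (d : ℕ) :
    Nat.card (Ideal.span {(d : ZMod n)}) = n / n.gcd d := by
  rw [← ZMod.addOrderOf_coe d hn, ← Nat.card_zmultiples, ← SetLike.coe_sort_coe,
    ZMod.coe_span_singleton_eq_zmultiples]
  rfl

/-- If `m ≠ 0` and `d = gcd(a₁,…,aₙ,m) ∣ b`, the congruence `Σ aᵢxᵢ ≡ b (mod m)`
has exactly `d·|m|^(n−1)` solutions in `(ZMod |m|)ⁿ`. -/
theorem linear_congruence_card (n : ℕ) (hn : 1 ≤ n) (a : Fin n → ℤ) (b m : ℤ)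
    (hm : m ≠ 0) (hd : (Int.gcd (Finset.univ.gcd a) m : ℤ) ∣ b) :
    Nat.card {x : Fin n → ZMod m.natAbs //
        ∑ i, (a i : ZMod m.natAbs) * x i = (b : ZMod m.natAbs)} =
      Int.gcd (Finset.univ.gcd a) m * m.natAbs ^ (n - 1) := by
  set M := m.natAbs
  set d := Int.gcd (univ.gcd a) m
  have hM : M ≠ 0 := Int.natAbs_ne_zero.mpr hm
  have hdM : d ∣ M := Int.gcd_dvd_natAbs_right _ _
  let f := (Fintype.linearCombination (ZMod M) fun i => (a i : ZMod M)).toAddMonoidHom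
  have hrange : (f.range : Set (ZMod M)) = Ideal.span {(d : ZMod M)} :=
    ZMod.coe_range_linearCombination_intCast a m
  have hb : (b : ZMod M) ∈ f.range := by
    rw [← SetLike.mem_coe, hrange, SetLike.mem_coe, Ideal.mem_span_singleton]
    simpa using map_dvd (Int.castRingHom (ZMod M)) hd
  have hcard_range : Nat.card f.range = M / d := by
    rw [← SetLike.coe_sort_coe, hrange, SetLike.coe_sort_coe,
      ZMod.natCard_span_singleton_natCast hM, Nat.gcd_eq_right hdM]
  have hsol :
      Nat.card {x : Fin n → ZMod M // ∑ i, (a i : ZMod M) * x i = b} * (M / d) = M ^ n := by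
    have hf (x) : f x = ∑ i, (a i : ZMod M) * x i := by
      simp [f, Fintype.linearCombination_apply, mul_comm]
    simp_rw [← hf, ← hcard_range, f.natCard_fiber_mul_natCard_range hb, Nat.card_fun,
      Nat.card_zmod, Nat.card_fin]
  have hMd : 0 < M / d :=
    Nat.div_pos (Nat.le_of_dvd (Nat.pos_of_ne_zero hM) hdM) (Int.gcd_pos_of_ne_zero_right _ hm)
  refine Nat.eq_of_mul_eq_mul_right hMd (hsol.trans ?_)
  calc M ^ n = M ^ (n - 1) * (d * (M / d)) := by
        rw [Nat.mul_div_cancel' hdM, ← pow_succ, Nat.sub_add_cancel hn]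
    _ = d * M ^ (n - 1) * (M / d) := by ring
end

section
/- If the system of congruences aᵢ·x ≡ bᵢ (mod mᵢ), i = 1,…,r, with all mᵢ ≠ 0, has an integer solution, then gcd(aᵢ, mᵢ) ∣ bᵢ for each i, and gcd(aᵢmⱼ, aⱼmᵢ) divides aᵢbⱼ − aⱼbᵢ for all i, j. -/
section CongruenceSolvability

variable {R : Type*} [CommRing R]

theorem dvd_of_dvd_of_dvd_mul_sub {d a m x b : R} (hda : d ∣ a) (hdm : d ∣ m)
    (hsol : m ∣ a * x - b) : d ∣ b := by
  have hd : d ∣ a * x - (a * x - b) := dvd_sub (hda.mul_right x) (hdm.trans hsol)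
  rwa [sub_sub_cancel] at hd

theorem dvd_cross_sub_of_dvd_mul_sub {d a a' m m' x b b' : R} (hd : d ∣ a * m')
    (hd' : d ∣ a' * m) (hsol : m ∣ a * x - b) (hsol' : m' ∣ a' * x - b') :
    d ∣ a * b' - a' * b := by
  have cross : a * b' - a' * b = a' * (a * x - b) - a * (a' * x - b') := by ring
  rw [cross]
  exact dvd_sub (hd'.trans (mul_dvd_mul_left a' hsol)) (hd.trans (mul_dvd_mul_left a hsol'))

end CongruenceSolvability

theorem system_necessary_conditions_general (r : ℕ) (a b m : Fin r → ℤ)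
    (h : ∃ x : ℤ, ∀ i, m i ∣ a i * x - b i) :
    (∀ i, (Int.gcd (a i) (m i) : ℤ) ∣ b i) ∧
    (∀ i j, (Int.gcd (a i * m j) (a j * m i) : ℤ) ∣ a i * b j - a j * b i) := by
  obtain ⟨x, hx⟩ := h
  exact ⟨fun i =>
      dvd_of_dvd_of_dvd_mul_sub (Int.gcd_dvd_left _ _) (Int.gcd_dvd_right _ _) (hx i),
    fun i j => dvd_cross_sub_of_dvd_mul_sub (Int.gcd_dvd_left _ _) (Int.gcd_dvd_right _ _)
      (hx i) (hx j)⟩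

/-- Necessary conditions for solvability of the system `aᵢ·x ≡ bᵢ (mod mᵢ)`. -/
theorem system_necessary_conditions (r : ℕ) (a b m : Fin r → ℤ)
    (hm : ∀ i, m i ≠ 0) (h : ∃ x : ℤ, ∀ i, m i ∣ a i * x - b i) :
    (∀ i, (Int.gcd (a i) (m i) : ℤ) ∣ b i) ∧
    (∀ i j, (Int.gcd (a i * m j) (a j * m i) : ℤ) ∣ a i * b j - a j * b i) :=
  system_necessary_conditions_general r a b m h
end
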